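/- arXiv:2502.20141 — 2 statements merged into one kernel-verified Lean document; each statement's English description precedes it below -/
import Mathlib

section
/- Let K be an n×m matrix with strictly positive entries, and let u, u* ∈ ℝ^n and v, v* ∈ ℝ^m be strictly positive vectors. Set P = diag(u) K diag(v) and P* = diag(u*) K diag(v*), and suppose P and P* have the same row sums, i.e., Σ_j P_{ij} = Σ_j P*_{ij} for every i. Then max_{i,j} | log P_{ij} - log P*_{ij} | ≤ d_H(u, u*) + d_H(v, v*), where d_H is the Hilbert projective metric. -/
/-! The row constraint forces `u i / u* i = (∑ₖ K i k v* k) / (∑ₖ K i k v k)`, so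
`P i j / P* i j` is a `K i · v`-weighted average of the cross ratios
`v j v* k / (v k v* j)`, each of which lies in `[exp (-d_H(v, v*)), exp d_H(v, v*)]`.
Hence the log-plans are even `d_H(v, v*)`-close, and `d_H(u, u*) ≥ 0`. -/

open BigOperators

/-- Hilbert projective metric on strictly positive vectors. -/
noncomputable def hilbertDist {n : ℕ} (u u' : Fin n → ℝ) : ℝ :=
  Real.log (⨆ p : Fin n × Fin n, (u p.1 * u' p.2) / (u p.2 * u' p.1))

open Real Finset

theorem hilbertDist_comm {n : ℕ} (u u' : Fin n → ℝ) :
    hilbertDist u u' = hilbertDist u' u := by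
  unfold hilbertDist
  rw [← (Equiv.prodComm (Fin n) (Fin n)).iSup_comp]
  simp only [Equiv.prodComm_apply, Prod.fst_swap, Prod.snd_swap, mul_comm]

theorem mul_le_exp_hilbertDist_mul {n : ℕ} {u u' : Fin n → ℝ}
    (hu : ∀ i, 0 < u i) (hu' : ∀ i, 0 < u' i) (j k : Fin n) :
    u j * u' k ≤ exp (hilbertDist u u') * (u k * u' j) := by
  set f := fun p : Fin n × Fin n => (u p.1 * u' p.2) / (u p.2 * u' p.1)
  have hjk : f (j, k) ≤ ⨆ p, f p := le_ciSup (Finite.bddAbove_range f) (j, k)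
  set S := ⨆ p, f p
  have hS : 0 < S := (div_pos (mul_pos (hu j) (hu' k)) (mul_pos (hu k) (hu' j))).trans_le hjk
  rw [hilbertDist, exp_log hS]
  rwa [div_le_iff₀ (mul_pos (hu k) (hu' j))] at hjk

theorem hilbertDist_nonneg {n : ℕ} [Nonempty (Fin n)] {u u' : Fin n → ℝ}
    (hu : ∀ i, 0 < u i) (hu' : ∀ i, 0 < u' i) :
    0 ≤ hilbertDist u u' := by
  obtain ⟨i⟩ := ‹Nonempty (Fin n)›
  have h := mul_le_exp_hilbertDist_mul hu hu' i i
  have hpos := mul_pos (hu i) (hu' i)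
  rw [← one_le_exp_iff]
  nlinarith

theorem sum_mul_le_exp_hilbertDist_mul_sum_mul {m : ℕ} {v v' w : Fin m → ℝ}
    (hv : ∀ k, 0 < v k) (hv' : ∀ k, 0 < v' k) (hw : ∀ k, 0 ≤ w k) (j : Fin m) :
    (∑ k, w k * v' k) * v j ≤ exp (hilbertDist v v') * ((∑ k, w k * v k) * v' j) := by
  rw [sum_mul, sum_mul, mul_sum]
  refine sum_le_sum fun k _ => ?_
  calc w k * v' k * v j = w k * (v j * v' k) := by ring
    _ ≤ w k * (exp (hilbertDist v v') * (v k * v' j)) :=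
        mul_le_mul_of_nonneg_left (mul_le_exp_hilbertDist_mul hv hv' j k) (hw k)
    _ = exp (hilbertDist v v') * (w k * v k * v' j) := by ring

theorem mul_mul_le_exp_hilbertDist_mul_mul {m : ℕ} {a a' : ℝ} {v v' w : Fin m → ℝ}
    (ha' : 0 < a') (hv : ∀ k, 0 < v k) (hv' : ∀ k, 0 < v' k) (hw : ∀ k, 0 < w k)
    (hsum : ∑ k, a * w k * v k = ∑ k, a' * w k * v' k) (j : Fin m) :
    a * w j * v j ≤ exp (hilbertDist v v') * (a' * w j * v' j) := by
  have hA : 0 < ∑ k, w k * v k :=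
    sum_pos (fun k _ => mul_pos (hw k) (hv k)) ⟨j, mem_univ j⟩
  have hrow : a * ∑ k, w k * v k = a' * ∑ k, w k * v' k := by
    simpa only [mul_sum, mul_assoc] using hsum
  have hweighted := sum_mul_le_exp_hilbertDist_mul_sum_mul hv hv' (fun k => (hw k).le) j
  refine le_of_mul_le_mul_left ?_ hA
  calc (∑ k, w k * v k) * (a * w j * v j)
      = a' * w j * ((∑ k, w k * v' k) * v j) := by linear_combination (w j * v j) * hrow
    _ ≤ a' * w j * (exp (hilbertDist v v') * ((∑ k, w k * v k) * v' j)) := by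
        gcongr
        exact mul_nonneg ha'.le (hw j).le
    _ = (∑ k, w k * v k) * (exp (hilbertDist v v') * (a' * w j * v' j)) := by ring

theorem abs_log_sub_log_le_of_le_exp_mul {x y c : ℝ} (hx : 0 < x) (hy : 0 < y)
    (hxy : x ≤ exp c * y) (hyx : y ≤ exp c * x) :
    |log x - log y| ≤ c := by
  have h₁ := log_le_log hx hxy
  have h₂ := log_le_log hy hyx
  rw [log_mul (exp_pos c).ne' hy.ne', log_exp] at h₁
  rw [log_mul (exp_pos c).ne' hx.ne', log_exp] at h₂
  rw [abs_le]
  constructor <;> linarith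

theorem log_plan_bound_general
    (n m : ℕ)
    (K : Matrix (Fin n) (Fin m) ℝ) (hK : ∀ i j, 0 < K i j)
    (u ustar : Fin n → ℝ) (v vstar : Fin m → ℝ)
    (hu : ∀ i, 0 < u i) (hustar : ∀ i, 0 < ustar i)
    (hv : ∀ j, 0 < v j) (hvstar : ∀ j, 0 < vstar j)
    (P Pstar : Matrix (Fin n) (Fin m) ℝ)
    (hP : ∀ i j, P i j = u i * K i j * v j)
    (hPstar : ∀ i j, Pstar i j = ustar i * K i j * vstar j)
    (hrow : ∀ i, ∑ j, P i j = ∑ j, Pstar i j) :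
    ∀ i j, |Real.log (P i j) - Real.log (Pstar i j)|
      ≤ hilbertDist u ustar + hilbertDist v vstar := by
  intro i j
  have : Nonempty (Fin n) := ⟨i⟩
  have hsum : ∑ k, u i * K i k * v k = ∑ k, ustar i * K i k * vstar k := by
    simpa only [hP, hPstar] using hrow i
  have hle := mul_mul_le_exp_hilbertDist_mul_mul (hustar i) hv hvstar (hK i) hsum j
  have hge := mul_mul_le_exp_hilbertDist_mul_mul (hu i) hvstar hv (hK i) hsum.symm j
  rw [hilbertDist_comm] at hge
  have hlog : |log (P i j) - log (Pstar i j)| ≤ hilbertDist v vstar := by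
    rw [hP, hPstar]
    exact abs_log_sub_log_le_of_le_exp_mul
      (mul_pos (mul_pos (hu i) (hK i j)) (hv j))
      (mul_pos (mul_pos (hustar i) (hK i j)) (hvstar j)) hle hge
  linarith [hilbertDist_nonneg hu hustar]

/-- for two positively scaled plans `P = diag(u) K diag(v)` and
`P* = diag(u*) K diag(v*)` with equal row sums, the sup-norm distance of the
log-plans is bounded by `d_H(u, u*) + d_H(v, v*)`. -/
theorem log_plan_bound
    (n m : ℕ) (hn : 0 < n) (hm : 0 < m)
    (K : Matrix (Fin n) (Fin m) ℝ) (hK : ∀ i j, 0 < K i j)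
    (u ustar : Fin n → ℝ) (v vstar : Fin m → ℝ)
    (hu : ∀ i, 0 < u i) (hustar : ∀ i, 0 < ustar i)
    (hv : ∀ j, 0 < v j) (hvstar : ∀ j, 0 < vstar j)
    (P Pstar : Matrix (Fin n) (Fin m) ℝ)
    (hP : ∀ i j, P i j = u i * K i j * v j)
    (hPstar : ∀ i j, Pstar i j = ustar i * K i j * vstar j)
    (hrow : ∀ i, ∑ j, P i j = ∑ j, Pstar i j) :
    ∀ i j, |Real.log (P i j) - Real.log (Pstar i j)|
      ≤ hilbertDist u ustar + hilbertDist v vstar :=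
  log_plan_bound_general n m K hK u ustar v vstar hu hustar hv hvstar P Pstar hP hPstar hrow
end

section
/- Let ε > 0, let μ ∈ ℝ^n and ν ∈ ℝ^m be strictly positive probability vectors, and let C be an n×m real matrix. Define the dual functional D(f, g) = Σ_i f_i μ_i + Σ_j g_j ν_j - ε Σ_{i,j} exp( ( f_i + g_j - C_{ij} ) / ε ) μ_i ν_j for f ∈ ℝ^n, g ∈ ℝ^m. Suppose (f*, g*) satisfies the Sinkhorn fixed-point (marginal) conditions Σ_j exp( (f*_i + g*_j - C_{ij})/ε ) ν_j = 1 for every i and Σ_i exp( (f*_i + g*_j - C_{ij})/ε ) μ_i = 1 for every j. Then D(f, g) ≤ D(f*, g*) for all f ∈ ℝ^n and g ∈ ℝ^m; i.e., the converged Sinkhorn potentials maximize the dual objective of entropic optimal transport. -/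
/-!
Each entry of the dual objective has the form `(f i + g j) P i j - ε exp (y / ε) μ i ν j` with
`y = f i + g j - C i j`, once the linear terms are spread over any plan `P` with marginals `μ`
and `ν`. Taking for `P` the plan of the fixed point, the entry becomes a function of `y` that is
concave with critical point at `y* = f* i + g* j - C i j`, so every entry is maximized at the
fixed point.
-/

open Finset Real

theorem sum_sum_add_mul_eq_of_marginals {ι κ R : Type*} [Fintype ι] [Fintype κ]
    [CommSemiring R] {P : ι → κ → R} {μ : ι → R} {ν : κ → R}
    (hrow : ∀ i, ∑ j, P i j = μ i) (hcol : ∀ j, ∑ i, P i j = ν j) (f : ι → R) (g : κ → R) :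
    ∑ i, ∑ j, (f i + g j) * P i j = ∑ i, f i * μ i + ∑ j, g j * ν j := by
  simp only [add_mul, sum_add_distrib, ← mul_sum, hrow]
  rw [sum_comm]
  simp only [← mul_sum, hcol]

theorem mul_exp_div_sub_mul_exp_div_le {ε : ℝ} (hε : 0 < ε) (x y : ℝ) :
    y * exp (x / ε) - ε * exp (y / ε) ≤ x * exp (x / ε) - ε * exp (x / ε) := by
  have htangent : (y - x) / ε + 1 ≤ exp ((y - x) / ε) := add_one_le_exp _
  have hscaled := mul_le_mul_of_nonneg_left htangent (mul_pos hε (exp_pos (x / ε))).le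
  have hlhs : ε * exp (x / ε) * ((y - x) / ε + 1) = (y - x) * exp (x / ε) + ε * exp (x / ε) := by
    field_simp
  have hrhs : ε * exp (x / ε) * exp ((y - x) / ε) = ε * exp (y / ε) := by
    rw [mul_assoc, ← exp_add]
    ring_nf
  linarith

section EntropicDual

variable {ι κ : Type*} [Fintype ι] [Fintype κ]

noncomputable def entropicDual (ε : ℝ) (μ : ι → ℝ) (ν : κ → ℝ) (C : Matrix ι κ ℝ)
    (f : ι → ℝ) (g : κ → ℝ) : ℝ :=
  (∑ i, f i * μ i) + (∑ j, g j * ν j)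
    - ε * ∑ i, ∑ j, exp ((f i + g j - C i j) / ε) * (μ i * ν j)

theorem entropicDual_le_of_marginals {ε : ℝ} (hε : 0 < ε) {μ : ι → ℝ} {ν : κ → ℝ}
    (hμ : ∀ i, 0 ≤ μ i) (hν : ∀ j, 0 ≤ ν j) {C : Matrix ι κ ℝ} {f' : ι → ℝ} {g' : κ → ℝ}
    (hrow : ∀ i, ∑ j, exp ((f' i + g' j - C i j) / ε) * ν j = 1)
    (hcol : ∀ j, ∑ i, exp ((f' i + g' j - C i j) / ε) * μ i = 1) (f : ι → ℝ) (g : κ → ℝ) :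
    entropicDual ε μ ν C f g ≤ entropicDual ε μ ν C f' g' := by
  set P : ι → κ → ℝ := fun i j => exp ((f' i + g' j - C i j) / ε) * (μ i * ν j)
  have hProw : ∀ i, ∑ j, P i j = μ i := fun i => by
    simpa [P, mul_sum, mul_comm, mul_left_comm, mul_assoc] using congrArg (μ i * ·) (hrow i)
  have hPcol : ∀ j, ∑ i, P i j = ν j := fun j => by
    simpa [P, mul_sum, mul_comm, mul_left_comm, mul_assoc] using congrArg (ν j * ·) (hcol j)
  have hspread : ∀ f g, entropicDual ε μ ν C f g = ∑ i, ∑ j,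
      ((f i + g j) * P i j - ε * exp ((f i + g j - C i j) / ε) * (μ i * ν j)) := by
    intro f g
    simp only [entropicDual, ← sum_sum_add_mul_eq_of_marginals hProw hPcol f g, mul_sum,
      ← sum_sub_distrib, mul_assoc]
  rw [hspread, hspread]
  refine sum_le_sum fun i _ => sum_le_sum fun j _ => ?_
  have hentry := mul_le_mul_of_nonneg_right
    (mul_exp_div_sub_mul_exp_div_le hε (f' i + g' j - C i j) (f i + g j - C i j))
    (mul_nonneg (hμ i) (hν j))
  simp only [P]
  linarith

end EntropicDual

theorem sinkhorn_potentials_maximize_dual_general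
    (n m : ℕ) (ε : ℝ) (hε : 0 < ε)
    (μ : Fin n → ℝ) (ν : Fin m → ℝ)
    (hμ : ∀ i, 0 < μ i) (hν : ∀ j, 0 < ν j)
    (C : Matrix (Fin n) (Fin m) ℝ)
    (D : (Fin n → ℝ) → (Fin m → ℝ) → ℝ)
    (hD : ∀ f g, D f g = (∑ i, f i * μ i) + (∑ j, g j * ν j)
      - ε * ∑ i, ∑ j, Real.exp ((f i + g j - C i j) / ε) * (μ i * ν j))
    (fstar : Fin n → ℝ) (gstar : Fin m → ℝ)
    (hrow : ∀ i, ∑ j, Real.exp ((fstar i + gstar j - C i j) / ε) * ν j = 1)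
    (hcol : ∀ j, ∑ i, Real.exp ((fstar i + gstar j - C i j) / ε) * μ i = 1) :
    ∀ f g, D f g ≤ D fstar gstar := by
  intro f g
  rw [hD, hD]
  exact entropicDual_le_of_marginals hε (fun i => (hμ i).le) (fun j => (hν j).le) hrow hcol f g

/-- the converged Sinkhorn potentials (satisfying the marginal
fixed-point conditions) maximize the dual objective of entropic optimal
transport. -/
theorem sinkhorn_potentials_maximize_dual
    (n m : ℕ) (ε : ℝ) (hε : 0 < ε)
    (μ : Fin n → ℝ) (ν : Fin m → ℝ)
    (hμ : ∀ i, 0 < μ i) (hν : ∀ j, 0 < ν j)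
    (hμ1 : ∑ i, μ i = 1) (hν1 : ∑ j, ν j = 1)
    (C : Matrix (Fin n) (Fin m) ℝ)
    (D : (Fin n → ℝ) → (Fin m → ℝ) → ℝ)
    (hD : ∀ f g, D f g = (∑ i, f i * μ i) + (∑ j, g j * ν j)
      - ε * ∑ i, ∑ j, Real.exp ((f i + g j - C i j) / ε) * (μ i * ν j))
    (fstar : Fin n → ℝ) (gstar : Fin m → ℝ)
    (hrow : ∀ i, ∑ j, Real.exp ((fstar i + gstar j - C i j) / ε) * ν j = 1)
    (hcol : ∀ j, ∑ i, Real.exp ((fstar i + gstar j - C i j) / ε) * μ i = 1) :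
    ∀ f g, D f g ≤ D fstar gstar :=
  sinkhorn_potentials_maximize_dual_general n m ε hε μ ν hμ hν C D hD fstar gstar hrow hcol
end
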